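/- arXiv:1804.11084 — 7 statements merged into one kernel-verified Lean document; each statement's English description precedes it below -/
import Mathlib

section
/- Let P and Q be Hermitian projectors on a finite-dimensional complex inner product space with rank(P) ≤ rank(Q). If ‖(Q − P)φ‖ ≤ δ for every unit vector φ in the range of Q, where δ < 1, then the operator norm satisfies ‖Q − P‖ ≤ √2·δ/√(1 − δ²). -/
open scoped InnerProductSpace

section Aux

variable {H : Type*} [NormedAddCommGroup H] [InnerProductSpace ℂ H]

/-- Pythagoras for a symmetric idempotent. -/
lemma proj_pythagoras (R : H →L[ℂ] H) (hsym : ∀ x y : H, ⟪R x, y⟫_ℂ = ⟪x, R y⟫_ℂ)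
    (hid : R ∘L R = R) (x : H) : ‖R x‖ ^ 2 + ‖x - R x‖ ^ 2 = ‖x‖ ^ 2 := by
  have hRR : ∀ y : H, R (R y) = R y := fun y =>
    congrArg (fun T : H →L[ℂ] H => T y) hid
  have h0 : ⟪R x, x - R x⟫_ℂ = 0 := by
    rw [hsym x (x - R x)]
    have hz : R (x - R x) = 0 := by
      rw [map_sub, hRR, sub_self]
    rw [hz, inner_zero_right]
  have h := norm_add_sq_eq_norm_sq_add_norm_sq_of_inner_eq_zero (R x) (x - R x) h0
  have hx : R x + (x - R x) = x := by abel
  rw [hx] at h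
  linarith

lemma proj_contract (R : H →L[ℂ] H) (hsym : ∀ x y : H, ⟪R x, y⟫_ℂ = ⟪x, R y⟫_ℂ)
    (hid : R ∘L R = R) (x : H) : ‖x - R x‖ ≤ ‖x‖ := by
  have h := proj_pythagoras R hsym hid x
  nlinarith [norm_nonneg (R x), norm_nonneg (x - R x), norm_nonneg x]

end Aux

set_option maxHeartbeats 1000000 in
/-- Projector Difference Lemma: if `P` and `Q` are Hermitian projectors with
`rank P ≤ rank Q` and `‖(Q - P) φ‖ ≤ δ` for every unit vector `φ` in the range of `Q`
(with `δ < 1`), then `‖Q - P‖ ≤ √2 δ / √(1 - δ²)`. -/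
theorem projector_difference_lemma
    {H : Type*} [NormedAddCommGroup H] [InnerProductSpace ℂ H] [FiniteDimensional ℂ H]
    (P Q : H →L[ℂ] H)
    (hPsa : IsSelfAdjoint P) (hPidem : P ∘L P = P)
    (hQsa : IsSelfAdjoint Q) (hQidem : Q ∘L Q = Q)
    (hrank : Module.finrank ℂ (LinearMap.range (P : H →ₗ[ℂ] H)) ≤
      Module.finrank ℂ (LinearMap.range (Q : H →ₗ[ℂ] H)))
    (δ : ℝ) (hδ0 : 0 ≤ δ) (hδ1 : δ < 1)
    (hbound : ∀ φ : H, ‖φ‖ = 1 → Q φ = φ → ‖(Q - P) φ‖ ≤ δ) :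
    ‖Q - P‖ ≤ Real.sqrt 2 * δ / Real.sqrt (1 - δ ^ 2) := by
  have hPsym : ∀ x y : H, ⟪P x, y⟫_ℂ = ⟪x, P y⟫_ℂ := fun x y => hPsa.isSymmetric x y
  have hQsym : ∀ x y : H, ⟪Q x, y⟫_ℂ = ⟪x, Q y⟫_ℂ := fun x y => hQsa.isSymmetric x y
  have hPP : ∀ y : H, P (P y) = P y := fun y => congrArg (fun T : H →L[ℂ] H => T y) hPidem
  have hQQ : ∀ y : H, Q (Q y) = Q y := fun y => congrArg (fun T : H →L[ℂ] H => T y) hQidem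
  set s : ℝ := Real.sqrt (1 - δ ^ 2) with hs_def
  have hs_pos : 0 < s := Real.sqrt_pos.mpr (by nlinarith)
  have hs_sq : s ^ 2 = 1 - δ ^ 2 := Real.sq_sqrt (by nlinarith)
  set δ' : ℝ := δ / s with hδ'_def
  have hδ'_nonneg : 0 ≤ δ' := div_nonneg hδ0 hs_pos.le
  have hδδ' : δ ≤ δ' := by
    rw [hδ'_def, le_div_iff₀ hs_pos]
    have hs1 : s ≤ 1 := by
      rw [hs_def]
      exact Real.sqrt_le_one.mpr (by nlinarith)
    nlinarith
  -- Step C: scaled bound on the range of Q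
  have hC : ∀ φ : H, Q φ = φ → ‖φ - P φ‖ ≤ δ * ‖φ‖ := by
    intro φ hφ
    rcases eq_or_ne φ 0 with rfl | hφ0
    · simp
    · have hn : ‖φ‖ ≠ 0 := norm_ne_zero_iff.mpr hφ0
      set c : ℂ := ((‖φ‖ : ℂ))⁻¹ with hc
      have hcn : ‖c‖ = ‖φ‖⁻¹ := by
        rw [hc, norm_inv, Complex.norm_real, norm_norm]
      set ψ : H := c • φ with hψ
      have hψn : ‖ψ‖ = 1 := by
        rw [hψ, norm_smul, hcn, inv_mul_cancel₀ hn]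
      have hQψ : Q ψ = ψ := by rw [hψ, map_smul, hφ]
      have hb := hbound ψ hψn hQψ
      have hval : (Q - P) ψ = c • ((Q - P) φ) := by
        rw [hψ, map_smul]
      rw [hval, norm_smul, hcn] at hb
      have hQPφ : (Q - P) φ = φ - P φ := by
        simp [ContinuousLinearMap.sub_apply, hφ]
      rw [hQPφ] at hb
      calc ‖φ - P φ‖ = ‖φ‖ * (‖φ‖⁻¹ * ‖φ - P φ‖) := by field_simp
        _ ≤ ‖φ‖ * δ := mul_le_mul_of_nonneg_left hb (norm_nonneg φ)
        _ = δ * ‖φ‖ := mul_comm _ _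
  -- Step D: lower bound on ‖P φ‖ for φ in range Q
  have hD : ∀ φ : H, Q φ = φ → s * ‖φ‖ ≤ ‖P φ‖ := by
    intro φ hφ
    have h1 := hC φ hφ
    have h2 := proj_pythagoras P hPsym hPidem φ
    have e1 : ‖φ - P φ‖ ^ 2 ≤ (δ * ‖φ‖) ^ 2 := by
      nlinarith [norm_nonneg (φ - P φ), mul_nonneg hδ0 (norm_nonneg φ)]
    have e2 : (s * ‖φ‖) ^ 2 ≤ ‖P φ‖ ^ 2 := by nlinarith
    nlinarith [norm_nonneg (P φ), mul_nonneg hs_pos.le (norm_nonneg φ)]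
  -- membership in range of Q
  have hmemQ : ∀ x : H, x ∈ LinearMap.range (Q : H →ₗ[ℂ] H) ↔ Q x = x := by
    intro x
    constructor
    · rintro ⟨y, rfl⟩
      exact hQQ y
    · intro h
      exact ⟨x, h⟩
  -- Step E: P maps range Q onto range P
  have hE : Submodule.map (P : H →ₗ[ℂ] H) (LinearMap.range (Q : H →ₗ[ℂ] H)) =
      LinearMap.range (P : H →ₗ[ℂ] H) := by
    set f : ↥(LinearMap.range (Q : H →ₗ[ℂ] H)) →ₗ[ℂ] H :=
      (P : H →ₗ[ℂ] H) ∘ₗ (LinearMap.range (Q : H →ₗ[ℂ] H)).subtype with hf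
    have hinj : Function.Injective f := by
      rw [← LinearMap.ker_eq_bot, LinearMap.ker_eq_bot']
      rintro ⟨x, hx⟩ hfx
      have hQx : Q x = x := (hmemQ x).mp hx
      have hPx : P x = 0 := hfx
      have hle := hD x hQx
      rw [hPx, norm_zero] at hle
      have hx0 : ‖x‖ = 0 := le_antisymm (by nlinarith) (norm_nonneg x)
      ext
      simpa using norm_eq_zero.mp hx0
    have hrange : LinearMap.range f =
        Submodule.map (P : H →ₗ[ℂ] H) (LinearMap.range (Q : H →ₗ[ℂ] H)) := by
      rw [hf, LinearMap.range_comp, Submodule.range_subtype]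
    have hd1 : Module.finrank ℂ
        (Submodule.map (P : H →ₗ[ℂ] H) (LinearMap.range (Q : H →ₗ[ℂ] H))) =
        Module.finrank ℂ (LinearMap.range (Q : H →ₗ[ℂ] H)) := by
      rw [← hrange]
      exact LinearMap.finrank_range_of_inj hinj
    apply Submodule.eq_of_le_of_finrank_le
    · exact Submodule.map_le_iff_le_comap.mpr fun x _ => ⟨x, rfl⟩
    · rw [hd1]; exact hrank
  -- Step F: vectors in range P are close to range Q
  have hF : ∀ ψ : H, ψ ∈ LinearMap.range (P : H →ₗ[ℂ] H) → ‖ψ - Q ψ‖ ≤ δ' * ‖ψ‖ := by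
    intro ψ hψ
    rw [← hE] at hψ
    obtain ⟨φ, hφmem, hφ⟩ := hψ
    have hQφ : Q φ = φ := (hmemQ φ).mp hφmem
    have hφ' : P φ = ψ := hφ
    have key : ψ - Q ψ = (P φ - φ) - Q (P φ - φ) := by
      rw [map_sub, hQφ, ← hφ']
      abel
    rw [key]
    calc ‖(P φ - φ) - Q (P φ - φ)‖ ≤ ‖P φ - φ‖ := proj_contract Q hQsym hQidem _
      _ = ‖φ - P φ‖ := by rw [norm_sub_rev]
      _ ≤ δ * ‖φ‖ := hC φ hQφ
      _ ≤ δ' * ‖ψ‖ := by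
          have h1 : s * ‖φ‖ ≤ ‖ψ‖ := by
            rw [← hφ']
            exact hD φ hQφ
          rw [hδ'_def, div_mul_eq_mul_div, le_div_iff₀ hs_pos]
          calc δ * ‖φ‖ * s = δ * (s * ‖φ‖) := by ring
            _ ≤ δ * ‖ψ‖ := mul_le_mul_of_nonneg_left h1 hδ0
  -- Step G: P is small on the kernel of Q
  have hG : ∀ v : H, Q v = 0 → ‖P v‖ ≤ δ' * ‖v‖ := by
    intro v hv
    rcases eq_or_ne (P v) 0 with h0 | h0
    · rw [h0, norm_zero]; positivity
    · have hsq : ‖P v‖ ^ 2 = RCLike.re ⟪P v, P v⟫_ℂ := by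
        rw [inner_self_eq_norm_sq]
      have h1 : ⟪P v, P v⟫_ℂ = ⟪v, P v⟫_ℂ := by
        rw [hPsym v (P v), hPP]
      have h2 : ⟪v, Q (P v)⟫_ℂ = 0 := by
        rw [← hQsym v (P v), hv, inner_zero_left]
      have h3 : ⟪v, P v⟫_ℂ = ⟪v, P v - Q (P v)⟫_ℂ := by
        rw [inner_sub_right, h2, sub_zero]
      have h5 : ‖P v - Q (P v)‖ ≤ δ' * ‖P v‖ := hF (P v) ⟨v, rfl⟩
      have h6 : ‖P v‖ ^ 2 ≤ ‖v‖ * (δ' * ‖P v‖) := by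
        rw [hsq, h1, h3]
        calc RCLike.re ⟪v, P v - Q (P v)⟫_ℂ ≤ ‖v‖ * ‖P v - Q (P v)‖ :=
              re_inner_le_norm _ _
          _ ≤ ‖v‖ * (δ' * ‖P v‖) := mul_le_mul_of_nonneg_left h5 (norm_nonneg v)
      have hPv_pos : 0 < ‖P v‖ := norm_pos_iff.mpr h0
      nlinarith
  -- Final assembly
  have hrhs : Real.sqrt 2 * δ / Real.sqrt (1 - δ ^ 2) = Real.sqrt 2 * δ' := by
    rw [hδ'_def, hs_def]; ring
  rw [hrhs]
  apply ContinuousLinearMap.opNorm_le_bound _ (mul_nonneg (Real.sqrt_nonneg 2) hδ'_nonneg)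
  intro x
  have hQu : Q (Q x) = Q x := hQQ x
  have hQv : Q (x - Q x) = 0 := by rw [map_sub, hQQ, sub_self]
  have hdecomp : (Q - P) x = (Q x - P (Q x)) - P (x - Q x) := by
    simp only [ContinuousLinearMap.sub_apply, map_sub]
    abel
  have h1 : ‖Q x - P (Q x)‖ ≤ δ' * ‖Q x‖ :=
    (hC (Q x) hQu).trans (mul_le_mul_of_nonneg_right hδδ' (norm_nonneg _))
  have h2 : ‖P (x - Q x)‖ ≤ δ' * ‖x - Q x‖ := hG _ hQv
  have hpyth : ‖Q x‖ ^ 2 + ‖x - Q x‖ ^ 2 = ‖x‖ ^ 2 := proj_pythagoras Q hQsym hQidem x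
  have hsum : ‖Q x‖ + ‖x - Q x‖ ≤ Real.sqrt 2 * ‖x‖ := by
    have h2' : Real.sqrt 2 ^ 2 = 2 := Real.sq_sqrt (by norm_num)
    nlinarith [sq_nonneg (‖Q x‖ - ‖x - Q x‖), Real.sqrt_nonneg 2,
      norm_nonneg (Q x), norm_nonneg (x - Q x), norm_nonneg x,
      sq_nonneg (‖Q x‖ + ‖x - Q x‖ - Real.sqrt 2 * ‖x‖),
      mul_nonneg (Real.sqrt_nonneg 2) (norm_nonneg x)]
  calc ‖(Q - P) x‖ = ‖(Q x - P (Q x)) - P (x - Q x)‖ := by rw [hdecomp]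
    _ ≤ ‖Q x - P (Q x)‖ + ‖P (x - Q x)‖ := norm_sub_le _ _
    _ ≤ δ' * ‖Q x‖ + δ' * ‖x - Q x‖ := add_le_add h1 h2
    _ = δ' * (‖Q x‖ + ‖x - Q x‖) := by ring
    _ ≤ δ' * (Real.sqrt 2 * ‖x‖) := mul_le_mul_of_nonneg_left hsum hδ'_nonneg
    _ = Real.sqrt 2 * δ' * ‖x‖ := by ring
end

section
/- Let P and Q be Hermitian projectors on a finite-dimensional complex inner product space, and let V be an isometry (V†V = 1). If ‖Q − V(P ⊗ P_anc)V†‖ ≤ ε for some Hermitian projector P_anc on the ancilla space, then ‖Q − V(P ⊗ 1_anc)V† Q‖ ≤ 2ε. (Bounded incoherence implies bounded unfaithfulness, with δ ≤ 2ε.) -/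
open Matrix
open scoped Kronecker

/-! The operator `Π = V (P ⊗ 1) V†` is an orthogonal projection fixing `A = V (P ⊗ P_anc) V†`,
because `V†V = 1` and `P (P ⊗ P_anc) = P ⊗ P_anc`. Hence `Q - Π Q = (1 - Π)(Q - A)`, and
`‖1 - Π‖ ≤ 1` gives `‖Q - Π Q‖ ≤ ‖Q - A‖ ≤ ε ≤ 2ε`. -/

theorem IsStarProjection.kronecker {R l n : Type*} [CommSemiring R] [StarRing R]
    [Fintype l] [Fintype n] {A : Matrix l l R} {B : Matrix n n R}
    (hA : IsStarProjection A) (hB : IsStarProjection B) : IsStarProjection (A ⊗ₖ B) where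
  isIdempotentElem := by
    rw [IsIdempotentElem, ← mul_kronecker_mul, hA.isIdempotentElem.eq, hB.isIdempotentElem.eq]
  isSelfAdjoint := by
    rw [IsSelfAdjoint, star_eq_conjTranspose, conjTranspose_kronecker, ← star_eq_conjTranspose,
      ← star_eq_conjTranspose, hA.isSelfAdjoint.star_eq, hB.isSelfAdjoint.star_eq]

theorem IsStarProjection.norm_sub_mul_le {R : Type*} [NormedRing R] [StarRing R] [CStarRing R]
    {p a : R} (hp : IsStarProjection p) (hpa : p * a = a) (q : R) :
    ‖q - p * q‖ ≤ ‖q - a‖ :=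
  calc ‖q - p * q‖ = ‖(1 - p) * (q - a)‖ := by
        rw [sub_mul, one_mul, mul_sub, hpa]; congr 1; abel
    _ ≤ ‖1 - p‖ * ‖q - a‖ := norm_mul_le _ _
    _ ≤ ‖q - a‖ := mul_le_of_le_one_left (norm_nonneg _) (hp.one_sub.norm_le _)

namespace ContinuousLinearMap

variable {𝕜 E F : Type*} [RCLike 𝕜]
  [NormedAddCommGroup E] [InnerProductSpace 𝕜 E] [CompleteSpace E]
  [NormedAddCommGroup F] [InnerProductSpace 𝕜 F] [CompleteSpace F]
  {V : E →L[𝕜] F}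

theorem conj_comp_conj_of_adjoint_comp_self (hV : adjoint V ∘L V = 1) (S T : E →L[𝕜] E) :
    (V ∘L S ∘L adjoint V) ∘L (V ∘L T ∘L adjoint V) = V ∘L (S ∘L T) ∘L adjoint V := by
  calc (V ∘L S ∘L adjoint V) ∘L (V ∘L T ∘L adjoint V)
      = V ∘L S ∘L (adjoint V ∘L V) ∘L T ∘L adjoint V := by simp only [comp_assoc]
    _ = V ∘L (S ∘L T) ∘L adjoint V := by rw [hV, one_def, id_comp, comp_assoc]

theorem _root_.IsStarProjection.conj_of_adjoint_comp_self {S : E →L[𝕜] E}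
    (hS : IsStarProjection S) (hV : adjoint V ∘L V = 1) :
    IsStarProjection (V ∘L S ∘L adjoint V) where
  isIdempotentElem := by
    rw [IsIdempotentElem, mul_def, conj_comp_conj_of_adjoint_comp_self hV,
      ← mul_def, hS.isIdempotentElem.eq]
  isSelfAdjoint := hS.isSelfAdjoint.conj_adjoint V

end ContinuousLinearMap

theorem incoherence_implies_unfaithfulness_general
    {ι κ : Type*} [Fintype ι] [DecidableEq ι] [Fintype κ] [DecidableEq κ]
    {Ht : Type*} [NormedAddCommGroup Ht] [InnerProductSpace ℂ Ht] [FiniteDimensional ℂ Ht]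
    (P : Matrix ι ι ℂ) (hPher : P.IsHermitian) (hPidem : P * P = P)
    (Panc : Matrix κ κ ℂ)
    (Q : Ht →L[ℂ] Ht)
    (V : EuclideanSpace ℂ (ι × κ) →L[ℂ] Ht)
    (hV : ContinuousLinearMap.adjoint V ∘L V = 1)
    (ε : ℝ)
    (hε : ‖Q - V ∘L Matrix.toEuclideanCLM (𝕜 := ℂ) (P ⊗ₖ Panc) ∘L
        ContinuousLinearMap.adjoint V‖ ≤ ε) :
    ‖Q - (V ∘L Matrix.toEuclideanCLM (𝕜 := ℂ) (P ⊗ₖ (1 : Matrix κ κ ℂ)) ∘L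
        ContinuousLinearMap.adjoint V) ∘L Q‖ ≤ 2 * ε := by
  set Pi := V ∘L Matrix.toEuclideanCLM (𝕜 := ℂ) (P ⊗ₖ (1 : Matrix κ κ ℂ)) ∘L
    ContinuousLinearMap.adjoint V
  set A := V ∘L Matrix.toEuclideanCLM (𝕜 := ℂ) (P ⊗ₖ Panc) ∘L ContinuousLinearMap.adjoint V
  have hP : IsStarProjection P := ⟨hPidem, hPher⟩
  have hPi : IsStarProjection Pi :=
    ((hP.kronecker (.one _)).map Matrix.toEuclideanCLM).conj_of_adjoint_comp_self hV
  have hPiA : Pi * A = A := by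
    rw [ContinuousLinearMap.mul_def, ContinuousLinearMap.conj_comp_conj_of_adjoint_comp_self hV,
      ← ContinuousLinearMap.mul_def, ← map_mul, ← mul_kronecker_mul, hPidem, one_mul]
  calc ‖Q - Pi ∘L Q‖ ≤ ‖Q - A‖ := hPi.norm_sub_mul_le hPiA Q
    _ ≤ ε := hε
    _ ≤ 2 * ε := by linarith [(norm_nonneg _).trans hε]

/-- Bounded incoherence implies bounded unfaithfulness:
if `‖Q − V (P ⊗ P_anc) V†‖ ≤ ε` then `‖Q − V (P ⊗ 1) V† Q‖ ≤ 2ε`. -/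
theorem incoherence_implies_unfaithfulness
    {ι κ : Type*} [Fintype ι] [DecidableEq ι] [Fintype κ] [DecidableEq κ]
    {Ht : Type*} [NormedAddCommGroup Ht] [InnerProductSpace ℂ Ht] [FiniteDimensional ℂ Ht]
    (P : Matrix ι ι ℂ) (hPher : P.IsHermitian) (hPidem : P * P = P)
    (Panc : Matrix κ κ ℂ) (hPancher : Panc.IsHermitian) (hPancidem : Panc * Panc = Panc)
    (Q : Ht →L[ℂ] Ht) (hQsa : IsSelfAdjoint Q) (hQidem : Q ∘L Q = Q)
    (V : EuclideanSpace ℂ (ι × κ) →L[ℂ] Ht)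
    (hV : ContinuousLinearMap.adjoint V ∘L V = 1)
    (ε : ℝ)
    (hε : ‖Q - V ∘L Matrix.toEuclideanCLM (𝕜 := ℂ) (P ⊗ₖ Panc) ∘L
        ContinuousLinearMap.adjoint V‖ ≤ ε) :
    ‖Q - (V ∘L Matrix.toEuclideanCLM (𝕜 := ℂ) (P ⊗ₖ (1 : Matrix κ κ ℂ)) ∘L
        ContinuousLinearMap.adjoint V) ∘L Q‖ ≤ 2 * ε :=
  incoherence_implies_unfaithfulness_general P hPher hPidem Panc Q V hV ε hε
end

section
/- Let P and Q be Hermitian projectors, and let V be a unitary operator. If ‖Q − V(P ⊗ P_anc)V†‖ ≤ ε for some Hermitian projector P_anc, then ‖Q − V(P ⊗ 1_anc)V† Q‖ ≤ ε. (For unitary encodings, unfaithfulness is bounded by incoherence without the factor 2.) -/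
open Matrix
open scoped Kronecker

lemma selfadj_idem_norm_le_one {A : Type*} [NormedRing A] [StarRing A] [CStarRing A]
    (p : A) (hsa : IsSelfAdjoint p) (hidem : p * p = p) : ‖p‖ ≤ 1 := by
  by_contra h
  push_neg at h
  have h1 : ‖p‖ * ‖p‖ = ‖p‖ := by
    calc ‖p‖ * ‖p‖ = ‖star p * p‖ := (CStarRing.norm_star_mul_self).symm
    _ = ‖p * p‖ := by rw [hsa.star_eq]
    _ = ‖p‖ := by rw [hidem]
  nlinarith

/-- For unitary encodings, unfaithfulness is bounded by incoherence without a factor of 2: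
if `V` is unitary and `‖Q − V (P ⊗ P_anc) V†‖ ≤ ε` then `‖Q − V (P ⊗ 1) V† Q‖ ≤ ε`. -/
theorem incoherence_implies_unfaithfulness_unitary
    {ι κ : Type*} [Fintype ι] [DecidableEq ι] [Fintype κ] [DecidableEq κ]
    {Ht : Type*} [NormedAddCommGroup Ht] [InnerProductSpace ℂ Ht] [FiniteDimensional ℂ Ht]
    (P : Matrix ι ι ℂ) (hPher : P.IsHermitian) (hPidem : P * P = P)
    (Panc : Matrix κ κ ℂ) (hPancher : Panc.IsHermitian) (hPancidem : Panc * Panc = Panc)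
    (Q : Ht →L[ℂ] Ht) (hQsa : IsSelfAdjoint Q) (hQidem : Q ∘L Q = Q)
    (V : EuclideanSpace ℂ (ι × κ) →L[ℂ] Ht)
    (hV : ContinuousLinearMap.adjoint V ∘L V = 1)
    (hV' : V ∘L ContinuousLinearMap.adjoint V = 1)
    (ε : ℝ)
    (hε : ‖Q - V ∘L Matrix.toEuclideanCLM (𝕜 := ℂ) (P ⊗ₖ Panc) ∘L
        ContinuousLinearMap.adjoint V‖ ≤ ε) :
    ‖Q - (V ∘L Matrix.toEuclideanCLM (𝕜 := ℂ) (P ⊗ₖ (1 : Matrix κ κ ℂ)) ∘L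
        ContinuousLinearMap.adjoint V) ∘L Q‖ ≤ ε := by
  set M := Matrix.toEuclideanCLM (𝕜 := ℂ) (P ⊗ₖ Panc) with hM
  set N := Matrix.toEuclideanCLM (𝕜 := ℂ) (P ⊗ₖ (1 : Matrix κ κ ℂ)) with hN
  set W := ContinuousLinearMap.adjoint V with hW
  set A := V ∘L M ∘L W with hA
  set B := V ∘L N ∘L W with hB
  have hWV : ∀ y, W (V y) = y := by
    intro y
    have := congrArg (fun T => T y) hV
    simpa using this
  -- N * M = M
  have hNM : N ∘L M = M := by
    show N * M = M
    rw [hN, hM, ← _root_.map_mul, ← mul_kronecker_mul, hPidem, one_mul]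
  have hNN : N ∘L N = N := by
    show N * N = N
    rw [hN, ← _root_.map_mul, ← mul_kronecker_mul, hPidem, one_mul]
  -- N is self-adjoint
  have hkron : star (P ⊗ₖ (1 : Matrix κ κ ℂ)) = P ⊗ₖ (1 : Matrix κ κ ℂ) := by
    ext i j
    rw [Matrix.star_apply]
    simp only [kroneckerMap_apply, star_mul', Matrix.one_apply]
    rcases eq_or_ne i.2 j.2 with h | h
    · simp [h, ← hPher.apply i.1 j.1, Matrix.conjTranspose_apply]
    · simp [h, Ne.symm h]
  have hNsa : star N = N := by
    rw [hN, ← map_star, hkron]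
  -- B is a self-adjoint idempotent
  have hBsa : IsSelfAdjoint B := by
    rw [hB]
    show star (V ∘L N ∘L W) = V ∘L N ∘L W
    have h1 : star (V ∘L N ∘L W) = ContinuousLinearMap.adjoint (V ∘L N ∘L W) := rfl
    rw [h1, ContinuousLinearMap.adjoint_comp, ContinuousLinearMap.adjoint_comp,
      hW, ContinuousLinearMap.adjoint_adjoint]
    have h2 : ContinuousLinearMap.adjoint N = star N := rfl
    rw [h2, hNsa, ContinuousLinearMap.comp_assoc]
  have hBN : ∀ X : EuclideanSpace ℂ (ι × κ) →L[ℂ] EuclideanSpace ℂ (ι × κ),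
      (V ∘L N ∘L W) ∘L (V ∘L X ∘L W) = V ∘L (N ∘L X) ∘L W := by
    intro X
    ext x
    simp [ContinuousLinearMap.comp_apply, hWV]
  have hBidem : B ∘L B = B := by
    rw [hB, hBN N, hNN]
  have hBA : B ∘L A = A := by rw [hB, hA, hBN M, hNM]
  -- key algebraic identity
  have key : Q - B ∘L Q = (1 - B) ∘L (Q - A) := by
    rw [ContinuousLinearMap.sub_comp, ContinuousLinearMap.comp_sub,
      ContinuousLinearMap.comp_sub, hBA]
    have h1 : ∀ X : Ht →L[ℂ] Ht, (1 : Ht →L[ℂ] Ht) ∘L X = X := fun X => by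
      ext x; simp [ContinuousLinearMap.comp_apply]
    rw [h1, h1]
    abel
  have h1B : ‖(1 : Ht →L[ℂ] Ht) - B‖ ≤ 1 := by
    apply selfadj_idem_norm_le_one
    · exact (IsSelfAdjoint.one (Ht →L[ℂ] Ht)).sub hBsa
    · have hmul : (B : Ht →L[ℂ] Ht) * B = B := hBidem
      have h2 : ((1 : Ht →L[ℂ] Ht) - B) * (1 - B) = 1 - B - B + B * B := by
        noncomm_ring
      rw [h2, hmul]; abel
  calc ‖Q - B ∘L Q‖ = ‖(1 - B) ∘L (Q - A)‖ := by rw [key]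
  _ ≤ ‖(1 : Ht →L[ℂ] Ht) - B‖ * ‖Q - A‖ := ContinuousLinearMap.opNorm_comp_le _ _
  _ ≤ 1 * ε := by
      apply mul_le_mul h1B hε (norm_nonneg _) zero_le_one
  _ = ε := one_mul ε
end

section
/- Let |g_B⟩ = C(n,n/2)^{−1/2} Σ_{|x|=n/2} |x⟩ be the n-qubit Dicke state with n even. Then for any two distinct qubit indices i ≠ j, the correlation ⟨g_B| σ_x^{(i)} σ_x^{(j)} |g_B⟩ = n/(2(n−1)). In particular it is at least 1/2 for all n ≥ 2. -/
open Matrix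

noncomputable def pauliX : Matrix (Fin 2) (Fin 2) ℂ := !![0, 1; 1, 0]

/-- A single-qubit operator `m` acting on qubit `i` of an `n`-qubit register. -/
noncomputable def liftOp (n : ℕ) (i : Fin n) (m : Matrix (Fin 2) (Fin 2) ℂ) :
    Matrix (Fin n → Fin 2) (Fin n → Fin 2) ℂ :=
  Matrix.of fun x y => if ∀ j, j ≠ i → x j = y j then m (x i) (y i) else 0

/-- The normalized Dicke state of Hamming weight `n/2` on `n` qubits. -/
noncomputable def dickeState (n : ℕ) : EuclideanSpace ℂ (Fin n → Fin 2) :=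
  ((Real.sqrt (Nat.choose n (n / 2)) : ℂ))⁻¹ •
    ∑ x ∈ Finset.univ.filter
        (fun x : Fin n → Fin 2 => (Finset.univ.filter fun i => x i = 1).card = n / 2),
      EuclideanSpace.single x (1 : ℂ)

/-!
`σ_x⁽ⁱ⁾ σ_x⁽ʲ⁾` is the permutation matrix of the double bit flip `x ↦ x + eᵢ + eⱼ`, so its
expectation in the Dicke state is `N / C(n, n/2)`, where `N` counts the words of weight `n/2`
whose double flip has weight `n/2` again. These are the words with `xᵢ ≠ xⱼ`; such a word is
determined by which of `i, j` carries its `1` and by an `(n/2 - 1)`-subset of the other `n - 2`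
qubits, so `N = 2 C(n-2, n/2-1)`. For `n = 2k + 2` the ratio `2 C(2k, k) / C(2k+2, k+1)` is
`(k+1)/(2k+1) = n/(2(n-1))`.
-/

open Finset

lemma pauliX_apply (a b : Fin 2) : pauliX a b = if b = a + 1 then 1 else 0 := by
  fin_cases a <;> fin_cases b <;> simp [pauliX]

lemma liftOp_pauliX (n : ℕ) (i : Fin n) :
    liftOp n i pauliX = of fun x y => if y = x + Pi.single i 1 then 1 else 0 := by
  ext x y
  have hflip : y = x + Pi.single i 1 ↔ (∀ k, k ≠ i → x k = y k) ∧ y i = x i + 1 := by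
    refine ⟨fun h => ?_, fun ⟨hne, hi⟩ => funext fun k => ?_⟩
    · subst h; exact ⟨fun k hk => by simp [hk], by simp⟩
    · by_cases hk : k = i
      · subst hk; simpa using hi
      · simp [hk, hne k hk]
  simp only [liftOp, of_apply, pauliX_apply, hflip]
  split_ifs <;> tauto

lemma of_ite_eq_mul_of_ite_eq {α R : Type*} [Fintype α] [DecidableEq α] [NonAssocSemiring R]
    (f g : α → α) :
    (of fun x y => if y = f x then (1 : R) else 0) * (of fun x y => if y = g x then 1 else 0) =
      of fun x y => if y = g (f x) then 1 else 0 := by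
  ext x y
  simp only [mul_apply, of_apply, ite_mul, one_mul, zero_mul, sum_ite_eq', mem_univ, if_true]

lemma inner_single_toEuclideanCLM_single {ι 𝕜 : Type*} [Fintype ι] [DecidableEq ι] [RCLike 𝕜]
    (M : Matrix ι ι 𝕜) (x y : ι) :
    inner 𝕜 (EuclideanSpace.single x 1) (toEuclideanCLM (𝕜 := 𝕜) M (EuclideanSpace.single y 1)) =
      M x y := by
  simp [EuclideanSpace.inner_single_left, mulVec, dotProduct]

lemma inner_sum_single_toEuclideanCLM_of_ite_eq {ι 𝕜 : Type*} [Fintype ι] [DecidableEq ι]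
    [RCLike 𝕜] (S : Finset ι) (f : ι → ι) :
    inner 𝕜 (∑ x ∈ S, EuclideanSpace.single x 1)
        (toEuclideanCLM (𝕜 := 𝕜) (of fun x y => if y = f x then 1 else 0)
          (∑ y ∈ S, EuclideanSpace.single y 1)) = #{x ∈ S | f x ∈ S} := by
  simp only [map_sum, sum_inner, inner_sum, inner_single_toEuclideanCLM_single, of_apply]
  rw [sum_comm]
  simp only [sum_ite_eq']
  rw [sum_boole]

section HammingWeight

variable {ι : Type*} [Fintype ι] [DecidableEq ι]

lemma filter_add_single_eq_one (x : ι → Fin 2) (i : ι) :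
    ({l | (x + Pi.single i 1 : ι → Fin 2) l = 1} : Finset ι) =
      if x i = 1 then ({l | x l = 1} : Finset ι).erase i
      else insert i ({l | x l = 1} : Finset ι) := by
  ext l
  rcases eq_or_ne l i with rfl | hl
  · split_ifs with h
    · simp [h]
    · simp only [h, mem_insert, mem_filter, mem_univ, true_and, iff_true, Pi.add_apply,
        Pi.single_eq_same, true_or]
      omega
  · split_ifs <;> simp [hl]

lemma card_ones_add_single (x : ι → Fin 2) (i : ι) :
    (#{l | (x + Pi.single i 1 : ι → Fin 2) l = 1} : ℤ) =
      #{l | x l = 1} + if x i = 1 then -1 else 1 := by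
  rw [filter_add_single_eq_one]
  split_ifs with h
  · rw [card_erase_of_mem (by simpa using h)]
    have : 0 < #{l | x l = 1} := card_pos.mpr ⟨i, by simpa using h⟩
    omega
  · rw [card_insert_of_notMem (by simpa using h)]
    push_cast
    ring

lemma card_ones_add_single_add_single_eq_iff {i j : ι} (hij : i ≠ j) (x : ι → Fin 2) :
    #{l | (x + Pi.single i 1 + Pi.single j 1 : ι → Fin 2) l = 1} = #{l | x l = 1} ↔
      x i ≠ x j := by
  have hi := card_ones_add_single x i
  have hj := card_ones_add_single (x + Pi.single i 1) j
  rw [Pi.add_apply, Pi.single_eq_of_ne hij.symm, add_zero] at hj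
  zify
  rw [hj, hi]
  have hsigns : ∀ a b : Fin 2,
      ((if a = 1 then -1 else 1) + (if b = 1 then -1 else 1) : ℤ) = 0 ↔ a ≠ b := by decide
  rw [add_assoc, add_eq_left, hsigns]

lemma card_finset_card_eq_and_mem_and_notMem {i j : ι} (hij : i ≠ j) (k : ℕ) :
    #{A : Finset ι | #A = k + 1 ∧ i ∈ A ∧ j ∉ A} = (Fintype.card ι - 2).choose k := by
  have hrest : #((univ.erase i).erase j) = Fintype.card ι - 2 := by
    rw [card_erase_of_mem (by simpa using hij.symm), card_erase_of_mem (mem_univ i), card_univ,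
      Nat.sub_sub]
  have mem_rest {A : Finset ι} (hA : A ∈ powersetCard k ((univ.erase i).erase j)) :
      #A = k ∧ i ∉ A ∧ j ∉ A := by
    obtain ⟨hsub, hcard⟩ := mem_powersetCard.mp hA
    exact ⟨hcard, fun h => by simpa using hsub h, fun h => by simpa using hsub h⟩
  rw [← hrest, ← card_powersetCard]
  refine card_nbij' (·.erase i) (insert i) ?_ ?_ ?_ ?_
  · intro A hA
    obtain ⟨hA, hiA, hjA⟩ := (mem_filter_univ A).mp hA
    refine mem_powersetCard.mpr
      ⟨fun l hl => ?_, by rw [card_erase_of_mem hiA, hA, Nat.add_sub_cancel]⟩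
    obtain ⟨hli, hlA⟩ := mem_erase.mp hl
    exact mem_erase.mpr ⟨fun h => hjA (h ▸ hlA), mem_erase.mpr ⟨hli, mem_univ l⟩⟩
  · intro A hA
    obtain ⟨hA, hiA, hjA⟩ := mem_rest hA
    refine (mem_filter_univ _).mpr ⟨by rw [card_insert_of_notMem hiA, hA], mem_insert_self i A, ?_⟩
    rw [mem_insert, not_or]
    exact ⟨hij.symm, hjA⟩
  · intro A hA
    exact insert_erase ((mem_filter_univ A).mp hA).2.1
  · intro A hA
    exact erase_insert (mem_rest hA).2.1

def funFinTwoEquivFinset : (ι → Fin 2) ≃ Finset ι where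
  toFun x := {l | x l = 1}
  invFun A l := if l ∈ A then 1 else 0
  left_inv x := funext fun l => by by_cases h : x l = 1 <;> simp [h]; omega
  right_inv A := by ext; simp

lemma card_fun_finTwo_card_ones_eq_and_ne {i j : ι} (hij : i ≠ j) (k : ℕ) :
    #{x : ι → Fin 2 | #{l | x l = 1} = k + 1 ∧ x i ≠ x j} =
      2 * (Fintype.card ι - 2).choose k := by
  have hne (x : ι → Fin 2) : x i ≠ x j ↔ x i = 1 ∧ x j ≠ 1 ∨ x j = 1 ∧ x i ≠ 1 := by omega
  rw [card_equiv funFinTwoEquivFinset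
    (t := {A | #A = k + 1 ∧ i ∈ A ∧ j ∉ A ∨ #A = k + 1 ∧ j ∈ A ∧ i ∉ A}) fun x => by
      simp [funFinTwoEquivFinset, hne, and_or_left]]
  rw [filter_or, card_union_of_disjoint (disjoint_filter.mpr fun A _ hA hA' => hA'.2.2 hA.2.1),
    card_finset_card_eq_and_mem_and_notMem hij, card_finset_card_eq_and_mem_and_notMem hij.symm,
    two_mul]

lemma card_card_ones_eq_and_card_ones_add_single_add_single_eq {i j : ι} (hij : i ≠ j) (k : ℕ) :
    #{x : ι → Fin 2 | #{l | x l = 1} = k + 1 ∧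
        #{l | (x + Pi.single i 1 + Pi.single j 1 : ι → Fin 2) l = 1} = k + 1} =
      2 * (Fintype.card ι - 2).choose k := by
  rw [← card_fun_finTwo_card_ones_eq_and_ne hij]
  refine congrArg card (filter_congr fun x _ => and_congr_right fun hx => ?_)
  rw [← card_ones_add_single_add_single_eq_iff hij x, hx]

end HammingWeight

lemma two_mul_centralBinom_div_centralBinom_succ {K : Type*} [Field K] [CharZero K] (k : ℕ) :
    (2 * k.centralBinom : K) / (k + 1).centralBinom = (k + 1) / (2 * k + 1) := by
  have h : ((k + 1 : ℕ) * (k + 1).centralBinom : K) = 2 * (2 * k + 1) * k.centralBinom := by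
    exact_mod_cast Nat.succ_mul_centralBinom_succ k
  rw [div_eq_div_iff (by exact_mod_cast (k + 1).centralBinom_ne_zero) (by norm_cast)]
  push_cast at h
  linear_combination -h

lemma inner_dickeState_toEuclideanCLM_of_ite_eq (n : ℕ) (f : (Fin n → Fin 2) → Fin n → Fin 2) :
    inner ℂ (dickeState n)
        (toEuclideanCLM (𝕜 := ℂ) (of fun x y => if y = f x then 1 else 0) (dickeState n)) =
      #{x | #{i | x i = 1} = n / 2 ∧ #{i | f x i = 1} = n / 2} / (n.choose (n / 2) : ℂ) := by
  have hnorm : starRingEnd ℂ ((Real.sqrt (n.choose (n / 2)) : ℂ)⁻¹) *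
      (Real.sqrt (n.choose (n / 2)) : ℂ)⁻¹ = (n.choose (n / 2) : ℂ)⁻¹ := by
    rw [map_inv₀, Complex.conj_ofReal, ← mul_inv, ← Complex.ofReal_mul,
      Real.mul_self_sqrt (Nat.cast_nonneg _), Complex.ofReal_natCast]
  rw [dickeState, map_smul, inner_smul_left, inner_smul_right,
    inner_sum_single_toEuclideanCLM_of_ite_eq, ← mul_assoc, hnorm, filter_filter, inv_mul_eq_div]
  simp only [mem_filter, mem_univ, true_and]

/-- Dicke-state correlation: `⟨g_B| σ_x⁽ⁱ⁾ σ_x⁽ʲ⁾ |g_B⟩ = n/(2(n−1))`, which is at least `1/2`. -/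
theorem dicke_xx_correlation (n : ℕ) (hn : Even n) (hn2 : 2 ≤ n)
    (i j : Fin n) (hij : i ≠ j) :
    (inner ℂ (dickeState n)
        ((Matrix.toEuclideanCLM (𝕜 := ℂ) (liftOp n i pauliX * liftOp n j pauliX))
          (dickeState n)) : ℂ)
      = ((n : ℂ) / (2 * ((n : ℂ) - 1))) ∧
    (1 / 2 : ℝ) ≤ (n : ℝ) / (2 * ((n : ℝ) - 1)) := by
  refine ⟨?_, ?_⟩
  · obtain ⟨k, rfl⟩ : ∃ k, n = 2 * (k + 1) := by obtain ⟨m, rfl⟩ := hn; exact ⟨m - 1, by omega⟩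
    rw [liftOp_pauliX, liftOp_pauliX, of_ite_eq_mul_of_ite_eq,
      inner_dickeState_toEuclideanCLM_of_ite_eq, Nat.mul_div_cancel_left _ two_pos,
      card_card_ones_eq_and_card_ones_add_single_add_single_eq hij, Fintype.card_fin,
      show 2 * (k + 1) - 2 = 2 * k by omega]
    push_cast
    rw [← Nat.centralBinom_eq_two_mul_choose, ← Nat.centralBinom_eq_two_mul_choose,
      two_mul_centralBinom_div_centralBinom_succ]
    field_simp
    ring
  · have h2 : (2 : ℝ) ≤ n := by exact_mod_cast hn2
    rw [div_le_div_iff₀ (by norm_num) (by linarith)]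
    linarith
end

section
/- Projection Lemma: Let H = H₁ + H₂ be a sum of two Hermitian operators on a finite-dimensional Hilbert space S₀ = S ⊕ S^⊥. Assume H₂ S = 0 (S is a zero-eigenspace of H₂) and the smallest eigenvalue of H₂ restricted to S^⊥ is at least J, with J > 2‖H₁‖. Then λ₁(H₁|_S) − ‖H₁‖²/(J − 2‖H₁‖) ≤ λ₁(H) ≤ λ₁(H₁|_S), where λ₁ denotes the smallest eigenvalue. -/
/-!
Write a unit vector as `x = u + v` with `u ∈ S`, `v ∈ Sᗮ`, `a = ‖u‖`, `b = ‖v‖`. Since `H₂` is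
self-adjoint and kills `S`, `⟪x, H₂ x⟫ = ⟪v, H₂ v⟫ ≥ J b²`, while bounding every term of
`⟪x, H₁ x⟫` except `⟪u, H₁ u⟫ ≥ λ a²` by `‖H₁‖` gives
`⟪x, H x⟫ ≥ λ a² - 2‖H₁‖ a b - ‖H₁‖ b² + J b²`. With `a² = 1 - b²`, `a ≤ 1` and `λ ≤ ‖H₁‖` this
is at least `λ + (J - 2‖H₁‖) b² - 2‖H₁‖ b`, whose minimum over `b` is `λ - ‖H₁‖² / (J - 2‖H₁‖)`.
The upper bound is immediate: on `S` the Rayleigh quotients of `H` and `H₁` agree.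
-/

open RCLike
open scoped InnerProductSpace

theorem sub_sq_div_le_of_sq_add_sq_eq_one {l n J a b : ℝ} (hn : 0 ≤ n) (hJ : 2 * n < J)
    (hl : l ≤ n) (hab : a ^ 2 + b ^ 2 = 1) (hb : 0 ≤ b) :
    l - n ^ 2 / (J - 2 * n) ≤ l * a ^ 2 - 2 * n * a * b - n * b ^ 2 + J * b ^ 2 := by
  have hgap : 0 < J - 2 * n := by linarith
  have ha : a ≤ 1 := by nlinarith
  have hsquare : 0 ≤ (J - 2 * n) * b ^ 2 - 2 * n * b + n ^ 2 / (J - 2 * n) := by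
    have hcomplete : (J - 2 * n) * b ^ 2 - 2 * n * b + n ^ 2 / (J - 2 * n)
        = ((J - 2 * n) * b - n) ^ 2 / (J - 2 * n) := by
      field_simp
      ring
    rw [hcomplete]
    positivity
  have hla : l * a ^ 2 = l - l * b ^ 2 := by linear_combination l * hab
  nlinarith [mul_le_mul_of_nonneg_right hl (sq_nonneg b),
    mul_nonneg hn (mul_nonneg hb (sub_nonneg.mpr ha))]

section Rayleigh

variable {𝕜 E : Type*} [RCLike 𝕜] [NormedAddCommGroup E] [InnerProductSpace 𝕜 E]

/-- `sInf (rayleighSet A S)` is the paper's `λ₁(A|_S)`. -/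
def rayleighSet (A : E →L[𝕜] E) (S : Submodule 𝕜 E) : Set ℝ :=
  {t | ∃ x ∈ S, ‖x‖ = 1 ∧ re ⟪x, A x⟫_𝕜 = t}

theorem abs_re_inner_apply_le (A : E →L[𝕜] E) (x y : E) :
    |re ⟪x, A y⟫_𝕜| ≤ ‖A‖ * ‖x‖ * ‖y‖ :=
  calc |re ⟪x, A y⟫_𝕜| ≤ ‖⟪x, A y⟫_𝕜‖ := abs_re_le_norm _
    _ ≤ ‖x‖ * ‖A y‖ := norm_inner_le_norm _ _
    _ ≤ ‖x‖ * (‖A‖ * ‖y‖) := by gcongr; exact A.le_opNorm y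
    _ = ‖A‖ * ‖x‖ * ‖y‖ := by ring

theorem re_inner_smul_apply_smul (A : E →L[𝕜] E) (r : ℝ) (x : E) :
    re ⟪(r : 𝕜) • x, A ((r : 𝕜) • x)⟫_𝕜 = r ^ 2 * re ⟪x, A x⟫_𝕜 := by
  simp only [map_smul, inner_smul_left, inner_smul_right, conj_ofReal, ← mul_assoc,
    ← ofReal_mul, re_ofReal_mul, sq]

theorem rayleighSet_top (A : E →L[𝕜] E) :
    rayleighSet A ⊤ = {t | ∃ x : E, ‖x‖ = 1 ∧ re ⟪x, A x⟫_𝕜 = t} := by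
  simp [rayleighSet]

theorem rayleighSet_add_of_apply_eq_zero {A B : E →L[𝕜] E} {S : Submodule 𝕜 E}
    (hB : ∀ x ∈ S, B x = 0) : rayleighSet (A + B) S = rayleighSet A S := by
  ext t
  refine exists_congr fun x => and_congr_right fun hx => ?_
  simp [hB x hx]

theorem rayleighSet_mono (A : E →L[𝕜] E) {S T : Submodule 𝕜 E} (h : S ≤ T) :
    rayleighSet A S ⊆ rayleighSet A T := by
  rintro t ⟨x, hx, hx1, rfl⟩
  exact ⟨x, h hx, hx1, rfl⟩

theorem neg_norm_le_of_mem_rayleighSet {A : E →L[𝕜] E} {S : Submodule 𝕜 E} {t : ℝ}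
    (ht : t ∈ rayleighSet A S) : -‖A‖ ≤ t ∧ t ≤ ‖A‖ := by
  obtain ⟨x, -, hx1, rfl⟩ := ht
  simpa [hx1] using abs_le.mp (abs_re_inner_apply_le A x x)

theorem bddBelow_rayleighSet (A : E →L[𝕜] E) (S : Submodule 𝕜 E) :
    BddBelow (rayleighSet A S) :=
  ⟨-‖A‖, fun _ ht => (neg_norm_le_of_mem_rayleighSet ht).1⟩

theorem rayleighSet_nonempty (A : E →L[𝕜] E) {S : Submodule 𝕜 E} (hS : S ≠ ⊥) :
    (rayleighSet A S).Nonempty := by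
  obtain ⟨x, hxS, hx⟩ := S.ne_bot_iff.mp hS
  exact ⟨_, (‖x‖⁻¹ : 𝕜) • x, S.smul_mem _ hxS, norm_smul_inv_norm hx, rfl⟩

theorem sInf_rayleighSet_le_norm (A : E →L[𝕜] E) {S : Submodule 𝕜 E} (hS : S ≠ ⊥) :
    sInf (rayleighSet A S) ≤ ‖A‖ := by
  obtain ⟨t, ht⟩ := rayleighSet_nonempty A hS
  exact (csInf_le (bddBelow_rayleighSet A S) ht).trans (neg_norm_le_of_mem_rayleighSet ht).2

theorem sInf_rayleighSet_mul_norm_sq_le (A : E →L[𝕜] E) {S : Submodule 𝕜 E} {u : E}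
    (hu : u ∈ S) : sInf (rayleighSet A S) * ‖u‖ ^ 2 ≤ re ⟪u, A u⟫_𝕜 := by
  rcases eq_or_ne u 0 with rfl | hu0
  · simp
  have hpos : 0 < ‖u‖ := norm_pos_iff.mpr hu0
  have hmem : ‖u‖⁻¹ ^ 2 * re ⟪u, A u⟫_𝕜 ∈ rayleighSet A S := by
    refine ⟨((‖u‖⁻¹ : ℝ) : 𝕜) • u, S.smul_mem _ hu, ?_, re_inner_smul_apply_smul A _ u⟩
    simpa using norm_smul_inv_norm hu0
  have := csInf_le (bddBelow_rayleighSet A S) hmem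
  rwa [inv_pow, ← div_eq_inv_mul, le_div_iff₀ (by positivity)] at this

theorem inner_add_apply_add_of_apply_eq_zero {B : E →L[𝕜] E}
    (hB : (B : E →ₗ[𝕜] E).IsSymmetric) {u : E} (hu : B u = 0) (v : E) : ⟪u + v, B (u + v)⟫_𝕜 = ⟪v, B v⟫_𝕜 := by
  have hcross : ⟪u, B v⟫_𝕜 = 0 := by simpa [hu] using (hB u v).symm
  simp [inner_add_left, hu, hcross]

theorem sub_le_re_inner_apply_add (A : E →L[𝕜] E) (u v : E) :
    re ⟪u, A u⟫_𝕜 - 2 * ‖A‖ * ‖u‖ * ‖v‖ - ‖A‖ * ‖v‖ ^ 2 ≤ re ⟪u + v, A (u + v)⟫_𝕜 := by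
  have huv := abs_le.mp (abs_re_inner_apply_le A u v)
  have hvu := abs_le.mp (abs_re_inner_apply_le A v u)
  have hvv := abs_le.mp (abs_re_inner_apply_le A v v)
  simp only [map_add, inner_add_left, inner_add_right]
  nlinarith [huv.1, hvu.1, hvv.1]

theorem sInf_rayleighSet_sub_le_re_inner_add_apply {A B : E →L[𝕜] E}
    (hB : (B : E →ₗ[𝕜] E).IsSymmetric) {S : Submodule 𝕜 E} [S.HasOrthogonalProjection]
    (hS : S ≠ ⊥) {J : ℝ} (hJ : 2 * ‖A‖ < J) (hker : ∀ x ∈ S, B x = 0)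
    (hgap : ∀ x ∈ Sᗮ, J * ‖x‖ ^ 2 ≤ re ⟪x, B x⟫_𝕜) {x : E} (hx : ‖x‖ = 1) :
    sInf (rayleighSet A S) - ‖A‖ ^ 2 / (J - 2 * ‖A‖) ≤ re ⟪x, (A + B) x⟫_𝕜 := by
  obtain ⟨u, hu, v, hv, rfl⟩ := S.exists_add_mem_mem_orthogonal x
  have hnorm : ‖u‖ ^ 2 + ‖v‖ ^ 2 = 1 := by
    have := norm_add_sq_eq_norm_sq_add_norm_sq_of_inner_eq_zero (𝕜 := 𝕜) u v
      (Submodule.inner_right_of_mem_orthogonal hu hv)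
    rw [hx] at this
    linarith
  have hsplit : re ⟪u + v, (A + B) (u + v)⟫_𝕜 = re ⟪u + v, A (u + v)⟫_𝕜 + re ⟪v, B v⟫_𝕜 := by
    rw [add_apply, inner_add_right, inner_add_apply_add_of_apply_eq_zero hB (hker u hu), map_add]
  rw [hsplit]
  calc sInf (rayleighSet A S) - ‖A‖ ^ 2 / (J - 2 * ‖A‖)
      ≤ sInf (rayleighSet A S) * ‖u‖ ^ 2 - 2 * ‖A‖ * ‖u‖ * ‖v‖ - ‖A‖ * ‖v‖ ^ 2 + J * ‖v‖ ^ 2 :=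
        sub_sq_div_le_of_sq_add_sq_eq_one (norm_nonneg A) hJ (sInf_rayleighSet_le_norm A hS)
          hnorm (norm_nonneg v)
    _ ≤ re ⟪u, A u⟫_𝕜 - 2 * ‖A‖ * ‖u‖ * ‖v‖ - ‖A‖ * ‖v‖ ^ 2 + re ⟪v, B v⟫_𝕜 := by
        linarith [sInf_rayleighSet_mul_norm_sq_le A hu, hgap v hv]
    _ ≤ re ⟪u + v, A (u + v)⟫_𝕜 + re ⟪v, B v⟫_𝕜 := by
        linarith [sub_le_re_inner_apply_add A u v]

end Rayleigh

theorem projection_lemma_general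
    {E : Type*} [NormedAddCommGroup E] [InnerProductSpace ℂ E] [FiniteDimensional ℂ E]
    (H1 H2 : E →L[ℂ] E) (hH2 : IsSelfAdjoint H2)
    (S : Submodule ℂ E) (hS : S ≠ ⊥)
    (J : ℝ) (hJ : 2 * ‖H1‖ < J)
    (hker : ∀ x ∈ S, H2 x = 0)
    (hgap : ∀ x ∈ Sᗮ, J * ‖x‖ ^ 2 ≤ ((inner ℂ x (H2 x) : ℂ)).re) :
    sInf {t : ℝ | ∃ x ∈ S, ‖x‖ = 1 ∧ ((inner ℂ x (H1 x) : ℂ)).re = t}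
        - ‖H1‖ ^ 2 / (J - 2 * ‖H1‖)
      ≤ sInf {t : ℝ | ∃ x : E, ‖x‖ = 1 ∧ ((inner ℂ x ((H1 + H2) x) : ℂ)).re = t} ∧
    sInf {t : ℝ | ∃ x : E, ‖x‖ = 1 ∧ ((inner ℂ x ((H1 + H2) x) : ℂ)).re = t}
      ≤ sInf {t : ℝ | ∃ x ∈ S, ‖x‖ = 1 ∧ ((inner ℂ x (H1 x) : ℂ)).re = t} := by
  have hT : {t : ℝ | ∃ x : E, ‖x‖ = 1 ∧ ((inner ℂ x ((H1 + H2) x) : ℂ)).re = t} =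
      rayleighSet (H1 + H2) ⊤ := (rayleighSet_top (H1 + H2)).symm
  change sInf (rayleighSet H1 S) - _ ≤ _ ∧ _ ≤ sInf (rayleighSet H1 S)
  rw [hT]
  constructor
  · refine le_csInf ((rayleighSet_nonempty _ hS).mono (rayleighSet_mono _ le_top)) ?_
    rintro t ⟨x, -, hx, rfl⟩
    exact sInf_rayleighSet_sub_le_re_inner_add_apply
      (ContinuousLinearMap.isSelfAdjoint_iff_isSymmetric.mp hH2) hS hJ hker hgap hx
  · calc sInf (rayleighSet (H1 + H2) ⊤) ≤ sInf (rayleighSet (H1 + H2) S) :=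
          csInf_le_csInf (bddBelow_rayleighSet _ _) (rayleighSet_nonempty _ hS)
            (rayleighSet_mono _ le_top)
      _ = sInf (rayleighSet H1 S) := by rw [rayleighSet_add_of_apply_eq_zero hker]

/-- Projection Lemma: for `H = H₁ + H₂` with `H₂ S = 0` and `H₂ ≥ J` on `S^⊥`, `J > 2‖H₁‖`:
`λ₁(H₁|_S) − ‖H₁‖²/(J − 2‖H₁‖) ≤ λ₁(H) ≤ λ₁(H₁|_S)`, where minimum eigenvalues of
Hermitian operators are expressed as infima of Rayleigh quotients. -/
theorem projection_lemma
    {E : Type*} [NormedAddCommGroup E] [InnerProductSpace ℂ E] [FiniteDimensional ℂ E]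
    (H1 H2 : E →L[ℂ] E) (hH1 : IsSelfAdjoint H1) (hH2 : IsSelfAdjoint H2)
    (S : Submodule ℂ E) (hS : S ≠ ⊥)
    (J : ℝ) (hJ : 2 * ‖H1‖ < J)
    (hker : ∀ x ∈ S, H2 x = 0)
    (hgap : ∀ x ∈ Sᗮ, J * ‖x‖ ^ 2 ≤ ((inner ℂ x (H2 x) : ℂ)).re) :
    sInf {t : ℝ | ∃ x ∈ S, ‖x‖ = 1 ∧ ((inner ℂ x (H1 x) : ℂ)).re = t}
        - ‖H1‖ ^ 2 / (J - 2 * ‖H1‖)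
      ≤ sInf {t : ℝ | ∃ x : E, ‖x‖ = 1 ∧ ((inner ℂ x ((H1 + H2) x) : ℂ)).re = t} ∧
    sInf {t : ℝ | ∃ x : E, ‖x‖ = 1 ∧ ((inner ℂ x ((H1 + H2) x) : ℂ)).re = t}
      ≤ sInf {t : ℝ | ∃ x ∈ S, ‖x‖ = 1 ∧ ((inner ℂ x (H1 x) : ℂ)).re = t} :=
  projection_lemma_general H1 H2 hH2 S hS J hJ hker hgap
end

section
/- Composition of incoherent gap-simulations: Suppose projectors satisfy ‖Q₁ − P₀′ Q₁‖ ≤ δ₁ where P₀′ = V₁(P₀ ⊗ 1)V₁†, and ‖Q₂ − P₁′ Q₂‖ ≤ δ₂ where P₁′ = V₂(Q₁ ⊗ 1)V₂†, with V₁, V₂ isometries and Q₁, Q₂, P₀ Hermitian projectors. Then ‖Q₂ − V₂V₁ P₀ V₁†V₂† Q₂‖ ≤ 2δ₂ + δ₁ (suppressing identity factors on ancillas). -/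
open Matrix
open scoped Kronecker
open scoped Matrix.Norms.L2Operator

/-- Kronecker product distributes over subtraction on the left factor. -/
lemma kron_sub {m n p q : Type*} (A B : Matrix m n ℂ) (C : Matrix p q ℂ) :
    (A - B) ⊗ₖ C = A ⊗ₖ C - B ⊗ₖ C := by
  ext ⟨i, j⟩ ⟨i', j'⟩
  simp [Matrix.kroneckerMap_apply, sub_mul]

/-- Conjugate transpose distributes over Kronecker products. -/
lemma kron_conjTranspose {m n p q : Type*} (A : Matrix m n ℂ) (B : Matrix p q ℂ) :
    (A ⊗ₖ B)ᴴ = Aᴴ ⊗ₖ Bᴴ := by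
  ext ⟨i, j⟩ ⟨i', j'⟩
  simp [Matrix.conjTranspose_apply, Matrix.kroneckerMap_apply]

/-- The identity matrix has `L2` operator norm at most one. -/
lemma l2_norm_one_le {n : Type*} [Fintype n] [DecidableEq n] :
    ‖(1 : Matrix n n ℂ)‖ ≤ 1 := by
  rw [Matrix.cstar_norm_def, _root_.map_one]
  exact ContinuousLinearMap.norm_id_le

/-- An isometry has `L2` operator norm at most one. -/
lemma iso_norm_le_one {m n : Type*} [Fintype m] [DecidableEq m] [Fintype n] [DecidableEq n]
    (W : Matrix m n ℂ) (hW : Wᴴ * W = 1) : ‖W‖ ≤ 1 := by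
  have h : ‖W‖ * ‖W‖ ≤ 1 := by
    rw [← Matrix.l2_opNorm_conjTranspose_mul_self, hW]
    exact l2_norm_one_le
  nlinarith [norm_nonneg (W : Matrix m n ℂ)]

/-- A Hermitian idempotent has `L2` operator norm at most one. -/
lemma proj_norm_le_one {n : Type*} [Fintype n] [DecidableEq n]
    (A : Matrix n n ℂ) (hher : A.IsHermitian) (hidem : A * A = A) : ‖A‖ ≤ 1 := by
  have h : ‖A‖ * ‖A‖ = ‖A‖ := by
    conv_lhs => rw [← Matrix.l2_opNorm_conjTranspose_mul_self]
    rw [hher.eq, hidem]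
  nlinarith [norm_nonneg (A : Matrix n n ℂ)]

/-- Kronecker product with an identity factor does not increase the `L2` operator norm. -/
lemma kron_one_norm_le {m κ : Type*} [Fintype m] [DecidableEq m] [Fintype κ] [DecidableEq κ]
    (A : Matrix m m ℂ) : ‖A ⊗ₖ (1 : Matrix κ κ ℂ)‖ ≤ ‖A‖ := by
  rw [Matrix.l2_opNorm_def]
  refine ContinuousLinearMap.opNorm_le_bound _ (norm_nonneg A) fun x => ?_
  -- the columns of `x` indexed by the ancilla
  set f : κ → EuclideanSpace ℂ m := fun j => (WithLp.equiv 2 (m → ℂ)).symm (fun i => x (i, j))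
    with hf
  have happ : ∀ p : m × κ,
      ((A ⊗ₖ (1 : Matrix κ κ ℂ)) *ᵥ (WithLp.equiv 2 ((m × κ) → ℂ) x)) p
        = (A *ᵥ (fun i => x (i, p.2))) p.1 := by
    rintro ⟨i, j⟩
    simp only [Matrix.mulVec, dotProduct, Fintype.sum_prod_type,
      Matrix.kroneckerMap_apply, Matrix.one_apply, mul_ite, mul_one, mul_zero, ite_mul, zero_mul]
    refine Finset.sum_congr rfl fun i' _ => ?_
    simp [WithLp.equiv]
  have hx2 : ‖x‖ ^ 2 = ∑ j, ‖f j‖ ^ 2 := by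
    rw [EuclideanSpace.norm_eq, Real.sq_sqrt (by positivity)]
    rw [Fintype.sum_prod_type_right]
    refine Finset.sum_congr rfl fun j _ => ?_
    rw [EuclideanSpace.norm_eq, Real.sq_sqrt (by positivity)]
    rfl
  have hbound : ∀ j, ‖(WithLp.equiv 2 (m → ℂ)).symm (A *ᵥ (fun i => x (i, j)))‖ ≤ ‖A‖ * ‖f j‖ := by
    intro j
    simpa [hf] using Matrix.l2_opNorm_mulVec A (f j)
  have hres : ‖(LinearEquiv.trans Matrix.toEuclideanLin
      LinearMap.toContinuousLinearMap) (A ⊗ₖ (1 : Matrix κ κ ℂ)) x‖ ^ 2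
      ≤ (‖A‖ * ‖x‖) ^ 2 := by
    have hLHS : ‖(LinearEquiv.trans Matrix.toEuclideanLin
        LinearMap.toContinuousLinearMap) (A ⊗ₖ (1 : Matrix κ κ ℂ)) x‖ ^ 2
        = ∑ j, ‖(WithLp.equiv 2 (m → ℂ)).symm (A *ᵥ (fun i => x (i, j)))‖ ^ 2 := by
      rw [EuclideanSpace.norm_eq, Real.sq_sqrt (by positivity), Fintype.sum_prod_type_right]
      refine Finset.sum_congr rfl fun j _ => ?_
      rw [EuclideanSpace.norm_eq, Real.sq_sqrt (by positivity)]
      refine Finset.sum_congr rfl fun i _ => ?_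
      congr 1
      exact congrArg norm (happ (i, j))
    rw [hLHS, mul_pow, hx2, Finset.mul_sum]
    refine Finset.sum_le_sum fun j _ => ?_
    have := hbound j
    have h0 : (0:ℝ) ≤ ‖(WithLp.equiv 2 (m → ℂ)).symm (A *ᵥ (fun i => x (i, j)))‖ :=
      norm_nonneg _
    nlinarith [norm_nonneg (f j), norm_nonneg (A : Matrix m m ℂ)]
  have h1 : (0:ℝ) ≤ ‖A‖ * ‖x‖ := by positivity
  nlinarith [norm_nonneg ((LinearEquiv.trans Matrix.toEuclideanLin
      LinearMap.toContinuousLinearMap) (A ⊗ₖ (1 : Matrix κ κ ℂ)) x)]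

lemma l2_norm_mul_le_of_le {l m n : Type*} [Fintype l] [Fintype m] [Fintype n]
    [DecidableEq m] [DecidableEq n]
    {a b : ℝ} (X : Matrix l m ℂ) (Y : Matrix m n ℂ) (hX : ‖X‖ ≤ a) (hY : ‖Y‖ ≤ b) :
    ‖X * Y‖ ≤ a * b :=
  le_trans (Matrix.l2_opNorm_mul X Y)
    (mul_le_mul hX hY (norm_nonneg Y) (le_trans (norm_nonneg X) hX))

/-- Composition of incoherent gap-simulations: unfaithfulness composes as
`‖Q₂ − V₂V₁ P₀ V₁†V₂† Q₂‖ ≤ 2δ₂ + δ₁` (identity factors on ancillas suppressed). -/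
theorem incoherent_gap_simulation_composition
    {ι0 κ0 ι1 κ1 ι2 : Type*}
    [Fintype ι0] [DecidableEq ι0] [Fintype κ0] [DecidableEq κ0]
    [Fintype ι1] [DecidableEq ι1] [Fintype κ1] [DecidableEq κ1]
    [Fintype ι2] [DecidableEq ι2]
    (P0 : Matrix ι0 ι0 ℂ) (hP0her : P0.IsHermitian) (hP0idem : P0 * P0 = P0)
    (Q1 : Matrix ι1 ι1 ℂ) (hQ1her : Q1.IsHermitian) (hQ1idem : Q1 * Q1 = Q1)
    (Q2 : Matrix ι2 ι2 ℂ) (hQ2her : Q2.IsHermitian) (hQ2idem : Q2 * Q2 = Q2)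
    (W1 : Matrix ι1 (ι0 × κ0) ℂ) (hW1 : W1ᴴ * W1 = 1)
    (W2 : Matrix ι2 (ι1 × κ1) ℂ) (hW2 : W2ᴴ * W2 = 1)
    (δ1 δ2 : ℝ)
    (h1 : ‖Matrix.toEuclideanCLM (𝕜 := ℂ)
        (Q1 - (W1 * (P0 ⊗ₖ (1 : Matrix κ0 κ0 ℂ)) * W1ᴴ) * Q1)‖ ≤ δ1)
    (h2 : ‖Matrix.toEuclideanCLM (𝕜 := ℂ)
        (Q2 - (W2 * (Q1 ⊗ₖ (1 : Matrix κ1 κ1 ℂ)) * W2ᴴ) * Q2)‖ ≤ δ2) :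
    ‖Matrix.toEuclideanCLM (𝕜 := ℂ)
        (Q2 - ((W2 * (W1 ⊗ₖ (1 : Matrix κ1 κ1 ℂ))) *
            ((P0 ⊗ₖ (1 : Matrix κ0 κ0 ℂ)) ⊗ₖ (1 : Matrix κ1 κ1 ℂ)) *
            (W2 * (W1 ⊗ₖ (1 : Matrix κ1 κ1 ℂ)))ᴴ) * Q2)‖ ≤ 2 * δ2 + δ1 := by
  rw [← Matrix.cstar_norm_def] at h1 h2 ⊢
  set P0' : Matrix ι1 ι1 ℂ := W1 * (P0 ⊗ₖ (1 : Matrix κ0 κ0 ℂ)) * W1ᴴ with hP0'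
  set P1' : Matrix ι2 ι2 ℂ := W2 * (Q1 ⊗ₖ (1 : Matrix κ1 κ1 ℂ)) * W2ᴴ with hP1'
  set E1 : Matrix ι1 ι1 ℂ := Q1 - P0' * Q1 with hE1
  set E2 : Matrix ι2 ι2 ℂ := Q2 - P1' * Q2 with hE2
  set R : Matrix ι2 ι2 ℂ := (W2 * (W1 ⊗ₖ (1 : Matrix κ1 κ1 ℂ))) *
      ((P0 ⊗ₖ (1 : Matrix κ0 κ0 ℂ)) ⊗ₖ (1 : Matrix κ1 κ1 ℂ)) *
      (W2 * (W1 ⊗ₖ (1 : Matrix κ1 κ1 ℂ)))ᴴ with hR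
  have hkr1 : (P0' ⊗ₖ (1 : Matrix κ1 κ1 ℂ)) =
      (W1 ⊗ₖ (1 : Matrix κ1 κ1 ℂ)) * ((P0 ⊗ₖ (1 : Matrix κ0 κ0 ℂ)) ⊗ₖ (1 : Matrix κ1 κ1 ℂ)) *
        (W1ᴴ ⊗ₖ (1 : Matrix κ1 κ1 ℂ)) := by
    rw [hP0']
    simp [← Matrix.mul_kronecker_mul, Matrix.mul_assoc]
  have hRrw : R = W2 * (P0' ⊗ₖ (1 : Matrix κ1 κ1 ℂ)) * W2ᴴ := by
    rw [hR, hkr1, Matrix.conjTranspose_mul, kron_conjTranspose, Matrix.conjTranspose_one]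
    simp only [Matrix.mul_assoc]
  have hmid : P1' - R * P1' = W2 * (E1 ⊗ₖ (1 : Matrix κ1 κ1 ℂ)) * W2ᴴ := by
    have key : W2 * (P0' ⊗ₖ (1 : Matrix κ1 κ1 ℂ)) * W2ᴴ * (W2 * (Q1 ⊗ₖ (1 : Matrix κ1 κ1 ℂ)) * W2ᴴ)
        = W2 * ((P0' * Q1) ⊗ₖ (1 : Matrix κ1 κ1 ℂ)) * W2ᴴ := by
      simp only [Matrix.mul_assoc]
      rw [← Matrix.mul_assoc W2ᴴ W2, hW2, Matrix.one_mul,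
        ← Matrix.mul_assoc (P0' ⊗ₖ (1 : Matrix κ1 κ1 ℂ)) (Q1 ⊗ₖ (1 : Matrix κ1 κ1 ℂ)) W2ᴴ,
        ← Matrix.mul_kronecker_mul, Matrix.one_mul]
    rw [hRrw, hP1', hE1, kron_sub, key]
    simp only [Matrix.mul_sub, Matrix.sub_mul]
  have hdecomp : Q2 - R * Q2 = E2 + (W2 * (E1 ⊗ₖ (1 : Matrix κ1 κ1 ℂ)) * W2ᴴ) * Q2 - R * E2 := by
    rw [hE2, ← hmid]
    simp only [Matrix.sub_mul, Matrix.mul_sub, Matrix.mul_assoc]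
    abel
  have hW2n : ‖W2‖ ≤ 1 := iso_norm_le_one W2 hW2
  have hW2Hn : ‖W2ᴴ‖ ≤ 1 := by rw [Matrix.l2_opNorm_conjTranspose]; exact hW2n
  have hW1n : ‖W1‖ ≤ 1 := iso_norm_le_one W1 hW1
  have hW1Hn : ‖W1ᴴ‖ ≤ 1 := by rw [Matrix.l2_opNorm_conjTranspose]; exact hW1n
  have hQ2n : ‖Q2‖ ≤ 1 := proj_norm_le_one Q2 hQ2her hQ2idem
  have hP0n : ‖P0‖ ≤ 1 := proj_norm_le_one P0 hP0her hP0idem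
  have hP0kn : ‖P0 ⊗ₖ (1 : Matrix κ0 κ0 ℂ)‖ ≤ 1 := le_trans (kron_one_norm_le P0) hP0n
  have hP0'n : ‖P0'‖ ≤ 1 := by
    rw [hP0']
    have ha : ‖W1 * (P0 ⊗ₖ (1 : Matrix κ0 κ0 ℂ))‖ ≤ 1 := by
      simpa using l2_norm_mul_le_of_le (a := 1) (b := 1) W1 _ hW1n hP0kn
    simpa using l2_norm_mul_le_of_le (a := 1) (b := 1)
      (W1 * (P0 ⊗ₖ (1 : Matrix κ0 κ0 ℂ))) W1ᴴ ha hW1Hn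
  have hRn : ‖R‖ ≤ 1 := by
    rw [hRrw]
    have hkr : ‖P0' ⊗ₖ (1 : Matrix κ1 κ1 ℂ)‖ ≤ 1 := le_trans (kron_one_norm_le P0') hP0'n
    have ha : ‖W2 * (P0' ⊗ₖ (1 : Matrix κ1 κ1 ℂ))‖ ≤ 1 := by
      simpa using l2_norm_mul_le_of_le (a := 1) (b := 1) W2 _ hW2n hkr
    simpa using l2_norm_mul_le_of_le (a := 1) (b := 1)
      (W2 * (P0' ⊗ₖ (1 : Matrix κ1 κ1 ℂ))) W2ᴴ ha hW2Hn
  have hE1kn : ‖E1 ⊗ₖ (1 : Matrix κ1 κ1 ℂ)‖ ≤ δ1 := le_trans (kron_one_norm_le E1) h1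
  have hmidn : ‖(W2 * (E1 ⊗ₖ (1 : Matrix κ1 κ1 ℂ)) * W2ᴴ) * Q2‖ ≤ δ1 := by
    have ha : ‖W2 * (E1 ⊗ₖ (1 : Matrix κ1 κ1 ℂ))‖ ≤ δ1 := by
      simpa using l2_norm_mul_le_of_le (a := 1) (b := δ1) W2 _ hW2n hE1kn
    have hb : ‖W2 * (E1 ⊗ₖ (1 : Matrix κ1 κ1 ℂ)) * W2ᴴ‖ ≤ δ1 := by
      simpa using l2_norm_mul_le_of_le (a := δ1) (b := 1) _ W2ᴴ ha hW2Hn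
    simpa using l2_norm_mul_le_of_le (a := δ1) (b := 1) _ Q2 hb hQ2n
  have hlastn : ‖R * E2‖ ≤ δ2 := by
    have h := l2_norm_mul_le_of_le (a := 1) (b := δ2) R E2 hRn h2
    simpa using h
  calc ‖Q2 - R * Q2‖ = ‖E2 + (W2 * (E1 ⊗ₖ (1 : Matrix κ1 κ1 ℂ)) * W2ᴴ) * Q2 - R * E2‖ := by
        rw [hdecomp]
    _ ≤ ‖E2 + (W2 * (E1 ⊗ₖ (1 : Matrix κ1 κ1 ℂ)) * W2ᴴ) * Q2‖ + ‖R * E2‖ := norm_sub_le _ _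
    _ ≤ (‖E2‖ + ‖(W2 * (E1 ⊗ₖ (1 : Matrix κ1 κ1 ℂ)) * W2ᴴ) * Q2‖) + ‖R * E2‖ := by
        gcongr; exact norm_add_le _ _
    _ ≤ (δ2 + δ1) + δ2 := by gcongr
    _ = 2 * δ2 + δ1 := by ring
end

section
/- Star-graph weak diluter spectrum: On n qubits plus one ancilla qubit, let N̂ = Σ_{i=1}^n |1⟩⟨1|^{(i)} and define H̃ = −Δ|0⟩⟨0|^anc − N̂ + √Δ · N̂ ⊗ σ_x^anc for a parameter Δ > 0. Then H̃ commutes with N̂, and on the sector where N̂ = m its eigenvalues are E_m^± = −Δ/2 − m ± √(m²Δ + Δ²/4). In particular E_0^+ = 0, E_1^+ = (−Δ/2 − 1) + √(Δ + Δ²/4), and |E_1^+| ≤ 1/Δ for all Δ ≥ 1. -/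
open Matrix
open scoped Kronecker

/-- Star-graph weak diluter spectrum: `H̃ = −Δ|0⟩⟨0|^anc − N̂ + √Δ N̂ ⊗ σ_x^anc` commutes with
`N̂`; on each sector `N̂ = m` it has eigenvalues `E_m^± = −Δ/2 − m ± √(m²Δ + Δ²/4)`;
moreover `E_0^+ = 0` and `|E_1^+| ≤ 1/Δ` for `Δ ≥ 1`. -/
theorem star_graph_weak_diluter (n : ℕ) (Δ : ℝ) (hΔ : 0 < Δ)
    (Nsys : Matrix (Fin n → Fin 2) (Fin n → Fin 2) ℂ)
    (hN : Nsys = Matrix.diagonal fun x => ((Finset.univ.filter fun i => x i = 1).card : ℂ))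
    (Ht : Matrix ((Fin n → Fin 2) × Fin 2) ((Fin n → Fin 2) × Fin 2) ℂ)
    (hHt : Ht = (-(Δ : ℂ)) • ((1 : Matrix (Fin n → Fin 2) (Fin n → Fin 2) ℂ) ⊗ₖ !![(1 : ℂ), 0; 0, 0])
        - Nsys ⊗ₖ (1 : Matrix (Fin 2) (Fin 2) ℂ)
        + (Real.sqrt Δ : ℂ) • (Nsys ⊗ₖ !![(0 : ℂ), 1; 1, 0])) :
    (Ht * (Nsys ⊗ₖ (1 : Matrix (Fin 2) (Fin 2) ℂ))
        = (Nsys ⊗ₖ (1 : Matrix (Fin 2) (Fin 2) ℂ)) * Ht) ∧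
    (∀ x : Fin n → Fin 2, ∀ s : Bool,
        ∃ v : ((Fin n → Fin 2) × Fin 2) → ℂ, v ≠ 0 ∧ (∀ p, p.1 ≠ x → v p = 0) ∧
          Ht *ᵥ v
            = ((-Δ / 2 - ((Finset.univ.filter fun i => x i = 1).card : ℝ)
                + (if s then (1 : ℝ) else -1) *
                  Real.sqrt (((Finset.univ.filter fun i => x i = 1).card : ℝ) ^ 2 * Δ
                    + Δ ^ 2 / 4) : ℝ) : ℂ) • v) ∧
    (-Δ / 2 - 0 + Real.sqrt ((0 : ℝ) ^ 2 * Δ + Δ ^ 2 / 4) = 0) ∧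
    (1 ≤ Δ → |(-Δ / 2 - 1 + Real.sqrt ((1 : ℝ) ^ 2 * Δ + Δ ^ 2 / 4))| ≤ 1 / Δ) := by
  refine ⟨?_, ?_, ?_, ?_⟩
  · -- commutation
    subst hHt
    simp only [Matrix.sub_mul, Matrix.add_mul, Matrix.mul_sub, Matrix.mul_add,
      Matrix.smul_mul, Matrix.mul_smul, ← Matrix.mul_kronecker_mul, one_mul, mul_one]
  · -- eigenvectors on each sector
    intro x s
    set m : ℝ := ((Finset.univ.filter fun i => x i = 1).card : ℝ) with hm
    set ε : ℝ := if s then (1:ℝ) else -1 with hε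
    set r : ℝ := Real.sqrt (m ^ 2 * Δ + Δ ^ 2 / 4) with hr
    have hr2 : r ^ 2 = m ^ 2 * Δ + Δ ^ 2 / 4 := Real.sq_sqrt (by positivity)
    have hq2 : (Real.sqrt Δ) ^ 2 = Δ := Real.sq_sqrt hΔ.le
    refine ⟨fun p => if p.1 = x then
        (if p.2 = 0 then ((Real.sqrt Δ * m + ε * r - Δ / 2 : ℝ) : ℂ)
         else ((Real.sqrt Δ * m + ε * r + Δ / 2 : ℝ) : ℂ)) else 0, ?_, ?_, ?_⟩
    · intro h
      have h0 := congrFun h (x, 0)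
      have h1 := congrFun h (x, 1)
      simp only [Pi.zero_apply, if_pos rfl] at h0 h1
      norm_num at h0 h1
      have : (Δ:ℂ) = 0 := by linear_combination h1 - h0
      exact hΔ.ne' (by exact_mod_cast this)
    · intro p hp
      simp [hp]
    · funext p
      obtain ⟨y, b⟩ := p
      subst hHt hN
      simp only [Matrix.mulVec, dotProduct, Fintype.sum_prod_type,
        Matrix.add_apply, Matrix.sub_apply, Matrix.smul_apply, Matrix.kroneckerMap_apply,
        Matrix.one_apply, Matrix.diagonal_apply, smul_eq_mul, Pi.smul_apply]
      rw [Finset.sum_comm]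
      have Hq : ((Real.sqrt Δ : ℝ):ℂ)^2 = (Δ:ℂ) := by exact_mod_cast congrArg Complex.ofReal hq2
      have Hr : ((r:ℝ):ℂ)^2 = (m:ℂ)^2*(Δ:ℂ) + (Δ:ℂ)^2/4 := by
        have := congrArg Complex.ofReal hr2; push_cast at this; exact this
      have Hε : ((ε:ℝ):ℂ)^2 = 1 := by
        have : ε^2 = 1 := by rcases s with _|_ <;> simp [hε]
        exact_mod_cast congrArg Complex.ofReal this
      simp only [mul_ite, mul_zero, ite_mul, zero_mul, Finset.sum_ite_eq', Finset.mem_univ,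
        if_true]
      by_cases hyx : y = x
      · subst hyx
        simp only [if_pos rfl]
        fin_cases b <;>
          · simp [Fin.sum_univ_two]
            have hmc : (((Finset.univ.filter fun i => y i = 1).card : ℕ) : ℂ) = ((m:ℝ):ℂ) := by
              rw [hm]; norm_cast
            rw [hmc]
            linear_combination (m:ℂ)^2*Hq - (r:ℂ)^2*Hε - Hr
      · simp [hyx]
  · -- E_0^+ = 0
    have : Real.sqrt ((0 : ℝ) ^ 2 * Δ + Δ ^ 2 / 4) = Δ/2 := by
      rw [show (0:ℝ)^2*Δ + Δ^2/4 = (Δ/2)^2 by ring, Real.sqrt_sq (by linarith)]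
    rw [this]; ring
  · -- |E_1^+| ≤ 1/Δ
    intro h1
    set s := Real.sqrt ((1 : ℝ) ^ 2 * Δ + Δ ^ 2 / 4) with hs
    have hs0 : 0 ≤ s := Real.sqrt_nonneg _
    have hs2 : s^2 = (1:ℝ)^2*Δ + Δ^2/4 := Real.sq_sqrt (by nlinarith)
    have hD : Δ * (1/Δ) = 1 := mul_one_div_cancel hΔ.ne'
    have hd1 : 1/Δ ≤ 1 := by rw [div_le_one hΔ]; exact h1
    have hd0 : 0 < 1/Δ := by positivity
    rw [abs_le]
    constructor
    · have key : (Δ/2 + 1 - 1/Δ)^2 ≤ s^2 := by nlinarith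
      have ht : 0 ≤ Δ/2 + 1 - 1/Δ := by linarith
      nlinarith
    · have key : s ≤ Δ/2 + 1 := by nlinarith [sq_nonneg (s - Δ/2 - 1), sq_nonneg (s+Δ/2+1)]
      linarith
end
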